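/- arXiv:1406.2356 — 7 statements merged into one kernel-verified Lean document; each statement's English description precedes it below -/
import Mathlib

section
/- For all natural numbers n and m, I(n+m) = ∑_{k≥0} k!·C(n,k)·C(m,k)·I(n-k)·I(m-k). -/
/-- Involution numbers via the recurrence. -/
def invRec : ℕ → ℕ
  | 0 => 1
  | 1 => 1
  | n + 2 => invRec (n + 1) + (n + 1) * invRec n

def Sterm (n m k : ℕ) : ℕ :=
  k.factorial * n.choose k * m.choose k * invRec (n - k) * invRec (m - k)

def S (n m : ℕ) : ℕ := ∑ k ∈ Finset.range (m + 1), Sterm n m k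

lemma invRec_succ (n : ℕ) : invRec (n + 1) = invRec n + n * invRec (n - 1) := by
  cases n with
  | zero => simp [invRec]
  | succ k => simp [invRec]

lemma invRec_split (r j : ℕ) :
    invRec (r + 1 - j) = invRec (r - j) + (r - j) * invRec (r - j - 1) := by
  rcases le_or_gt j r with h | h
  · have : r + 1 - j = (r - j) + 1 := by omega
    rw [this, invRec_succ]
  · have h1 : r + 1 - j = 1 ∨ r + 1 - j = 0 := by omega
    have h2 : r - j = 0 := by omega
    rcases h1 with h1 | h1 <;> simp [h1, h2, invRec]

lemma S_ext (n m N : ℕ) (h : m + 1 ≤ N) :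
    ∑ k ∈ Finset.range N, Sterm n m k = S n m := by
  rw [S]
  apply (Finset.sum_subset (Finset.range_subset_range.mpr h) ?_).symm
  intro k _ hk
  have : m < k := by simpa using hk
  simp [Sterm, Nat.choose_eq_zero_of_lt this]

lemma S_zero_left (m : ℕ) : S 0 m = invRec m := by
  rw [S, Finset.sum_range_succ']
  simp [Sterm, invRec, Nat.choose_eq_zero_of_lt]

lemma alg (a Cp Cpq Cq Cr0 Cr1 Cr2 x y0 y1 ym d j p r : ℕ)
    (hP : Cr2 = Cq + Cr1) (hI : y1 = y0 + d * ym)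
    (hA : d * Cr1 = (r + 1) * Cr0) (hB : (j + 1) * Cp = (p + 1) * Cpq) :
    ((j + 1) * a) * Cp * Cr2 * x * y1 =
      ((j + 1) * a) * Cp * Cr1 * x * y0 + (r + 1) * (((j + 1) * a) * Cp * Cr0 * x * ym)
        + (p + 1) * (a * Cpq * Cq * x * (y0 + d * ym)) := by
  subst hP hI
  zify at hA hB ⊢
  linear_combination ((j : ℤ) + 1) * a * Cp * x * ym * hA
    + ((a : ℤ) * Cq * x * (y0 + d * ym)) * hB

lemma termwise (p r j : ℕ) :
    Sterm (p + 1) (r + 2) (j + 1) =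
      Sterm (p + 1) (r + 1) (j + 1) + (r + 1) * Sterm (p + 1) r (j + 1)
        + (p + 1) * Sterm p (r + 1) j := by
  have hsub1 : p + 1 - (j + 1) = p - j := by omega
  have hsub2 : r + 2 - (j + 1) = r + 1 - j := by omega
  have hsub3 : r + 1 - (j + 1) = r - j := by omega
  have hsub4 : r - (j + 1) = r - j - 1 := by omega
  have hP : (r + 2).choose (j + 1) = (r + 1).choose j + (r + 1).choose (j + 1) :=
    Nat.choose_succ_succ (r + 1) j
  have hI := invRec_split r j
  have hA : (r - j) * (r + 1).choose (j + 1) = (r + 1) * r.choose (j + 1) := by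
    have := Nat.choose_mul_succ_eq r (j + 1)
    have h2 : r + 1 - (j + 1) = r - j := by omega
    rw [h2] at this
    linarith [this]
  have hB : (j + 1) * (p + 1).choose (j + 1) = (p + 1) * p.choose j := by
    rw [mul_comm]
    exact (Nat.add_one_mul_choose_eq p j).symm
  have hfac : (j + 1).factorial = (j + 1) * j.factorial := Nat.factorial_succ j
  simp only [Sterm, hsub1, hsub2, hsub3, hsub4, hfac]
  rw [hI]  -- rewrite invRec (r+1-j) everywhere
  exact alg j.factorial ((p + 1).choose (j + 1)) (p.choose j) ((r + 1).choose j)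
    (r.choose (j + 1)) ((r + 1).choose (j + 1)) ((r + 2).choose (j + 1))
    (invRec (p - j)) (invRec (r - j)) _ (invRec (r - j - 1)) (r - j) j p r hP rfl hA hB

lemma S_step (p r : ℕ) :
    S (p + 1) (r + 2) =
      S (p + 1) (r + 1) + (r + 1) * S (p + 1) r + (p + 1) * S p (r + 1) := by
  have e1 : S (p + 1) (r + 1) = ∑ k ∈ Finset.range (r + 3), Sterm (p + 1) (r + 1) k :=
    (S_ext _ _ _ (by omega)).symm
  have e2 : S (p + 1) r = ∑ k ∈ Finset.range (r + 3), Sterm (p + 1) r k :=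
    (S_ext _ _ _ (by omega)).symm
  rw [S, e1, e2, Finset.sum_range_succ' (fun k => Sterm (p + 1) (r + 2) k) (r + 2),
    Finset.sum_range_succ' (fun k => Sterm (p + 1) (r + 1) k) (r + 2),
    Finset.sum_range_succ' (fun k => Sterm (p + 1) r k) (r + 2)]
  have hterm : ∀ j ∈ Finset.range (r + 2),
      Sterm (p + 1) (r + 2) (j + 1) =
        Sterm (p + 1) (r + 1) (j + 1) + (r + 1) * Sterm (p + 1) r (j + 1)
          + (p + 1) * Sterm p (r + 1) j := fun j _ => termwise p r j
  rw [Finset.sum_congr rfl hterm]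
  have h0 : Sterm (p + 1) (r + 2) 0 =
      Sterm (p + 1) (r + 1) 0 + (r + 1) * Sterm (p + 1) r 0 := by
    simp [Sterm, invRec]
    ring
  rw [h0, S]
  rw [Finset.sum_add_distrib, Finset.sum_add_distrib, ← Finset.mul_sum, ← Finset.mul_sum]
  ring

lemma key : ∀ m n : ℕ, invRec (n + m) = S n m := by
  intro m
  induction m using Nat.strong_induction_on with
  | _ m ih =>
    intro n
    match m with
    | 0 =>
      rw [S]
      simp [Sterm, invRec]
    | 1 =>
      rw [S, Finset.sum_range_succ, Finset.sum_range_succ, Finset.sum_range_zero]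
      simp [Sterm, invRec]
      rw [invRec_succ]
      try ring
    | r + 2 =>
      cases n with
      | zero => rw [S_zero_left]; simp
      | succ p =>
        have h1 := ih (r + 1) (by omega) (p + 1)
        have h2 := ih r (by omega) (p + 1)
        have h3 := ih (r + 1) (by omega) p
        have h4 : S p (r + 1) = S (p + 1) r := by
          rw [← h3, ← h2]
          ring_nf
        have hrec : invRec (p + 1 + (r + 2)) =
            invRec (p + 1 + (r + 1)) + (p + r + 2) * invRec (p + 1 + r) := by
          have : p + 1 + (r + 2) = (p + r + 1) + 2 := by ring
          rw [this]
          show invRec (p + r + 1 + 1) + (p + r + 1 + 1) * invRec (p + r + 1) = _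
          congr 2 <;> ring_nf
        rw [hrec, h1, h2, S_step, h4]
        ring
  
theorem involution_convolution (n m : ℕ) :
    invRec (n + m) = ∑ k ∈ Finset.range (n + m + 1),
      k.factorial * n.choose k * m.choose k * invRec (n - k) * invRec (m - k) := by
  show invRec (n + m) = ∑ k ∈ Finset.range (n + m + 1), Sterm n m k
  exact (key m n).trans (S_ext n m (n + m + 1) (by omega)).symm
end

section
/- If p is an odd prime and p does not divide I(n) for any 0 ≤ n ≤ p-1, then p does not divide I(n) for any natural number n. -/
open Finset Nat

lemma df_odd (k : ℕ) : (2*k+1)‼ = (2*k+1) * (2*k-1)‼ := by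
  cases k with
  | zero => rfl
  | succ k =>
    have h1 : 2*(k+1)+1 = (2*k+1)+2 := by ring
    have h2 : 2*(k+1)-1 = 2*k+1 := by omega
    rw [h1, h2, Nat.doubleFactorial_add_two]

lemma term_eq (n k : ℕ) :
    (n+1).choose (2*k+1) * (2*k+1)‼ = (n+1) * (n.choose (2*k) * (2*k-1)‼) := by
  calc (n+1).choose (2*k+1) * (2*k+1)‼
      = ((n+1).choose (2*k+1) * (2*k+1)) * (2*k-1)‼ := by rw [df_odd]; ring
    _ = (Nat.succ n * n.choose (2*k)) * (2*k-1)‼ := by rw [Nat.add_one_mul_choose_eq]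
    _ = (n+1) * (n.choose (2*k) * (2*k-1)‼) := by simp [Nat.succ_eq_add_one]; ring

lemma key_s7 (n : ℕ) :
    ∑ k ∈ range (n + 3), (n+2).choose (2*k) * (2*k-1)‼
      = ∑ k ∈ range (n + 2), (n+1).choose (2*k) * (2*k-1)‼
        + (n+1) * ∑ k ∈ range (n + 1), n.choose (2*k) * (2*k-1)‼ := by
  rw [Finset.sum_range_succ' (fun k => (n+2).choose (2*k) * (2*k-1)‼)]
  have pas : ∀ k, (n+2).choose (2*(k+1)) = (n+1).choose (2*k+1) + (n+1).choose (2*k+2) := by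
    intro k
    have : 2*(k+1) = (2*k+1)+1 := by ring
    rw [this, Nat.choose_succ_succ]
  simp only [pas, add_mul]
  rw [Finset.sum_add_distrib]
  have e1 : ∑ k ∈ range (n+2), (n+1).choose (2*k+1) * (2*(k+1)-1)‼
      = (n+1) * ∑ k ∈ range (n + 1), n.choose (2*k) * (2*k-1)‼ := by
    rw [Finset.mul_sum, Finset.sum_range_succ (fun k => (n+1).choose (2*k+1) * (2*(k+1)-1)‼)]
    have last0 : (n+1).choose (2*(n+1)+1) = 0 := Nat.choose_eq_zero_of_lt (by omega)
    have h3 : ∀ k : ℕ, 2*(k+1)-1 = 2*k+1 := fun k => by omega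
    simp only [h3, last0, zero_mul, add_zero]
    exact Finset.sum_congr rfl fun k _ => term_eq n k
  have e2 : ∑ k ∈ range (n+2), (n+1).choose (2*k+2) * (2*(k+1)-1)‼ + 1
      = ∑ k ∈ range (n + 2), (n+1).choose (2*k) * (2*k-1)‼ := by
    rw [Finset.sum_range_succ' (fun k => (n+1).choose (2*k) * (2*k-1)‼)]
    rw [Finset.sum_range_succ (fun k => (n+1).choose (2*k+2) * (2*(k+1)-1)‼)]
    have last0 : (n+1).choose (2*(n+1)+2) = 0 := Nat.choose_eq_zero_of_lt (by omega)
    have h3 : ∀ k : ℕ, 2*(k+1)-1 = 2*k+1 := fun k => by omega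
    have h4 : ∀ k : ℕ, 2*(k+1) = 2*k+2 := fun k => by ring
    simp only [h3, h4, zero_mul, add_zero]
    rw [Nat.choose_eq_zero_of_lt (by omega : n+1 < 2*n+2+2)]
    simp
  have hS : (n+1) * (∑ k ∈ range (n + 1), n.choose (2*k) * (2*k-1)‼)
      = n * (∑ k ∈ range (n + 1), n.choose (2*k) * (2*k-1)‼)
        + (∑ k ∈ range (n + 1), n.choose (2*k) * (2*k-1)‼) := by ring
  norm_num
  omega

lemma invRec_sum : ∀ n : ℕ, invRec n = ∑ k ∈ range (n + 1), n.choose (2*k) * (2*k-1)‼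
  | 0 => by simp [invRec]
  | 1 => by simp [invRec]; decide
  | n + 2 => by
    rw [invRec, invRec_sum (n+1), invRec_sum n]
    exact (key_s7 n).symm

lemma invRec_p (p : ℕ) (hp : p.Prime) (hodd : Odd p) : invRec p ≡ 1 [MOD p] := by
  rw [invRec_sum, Finset.sum_range_succ' (fun k => p.choose (2*k) * (2*k-1)‼)]
  have h0 : p.choose (2*0) * (2*0-1)‼ = 1 := by norm_num
  rw [h0]
  have hdvd : p ∣ ∑ k ∈ range p, p.choose (2*(k+1)) * (2*(k+1)-1)‼ := by
    apply Finset.dvd_sum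
    intro k _
    apply Dvd.dvd.mul_right
    by_cases hk : p < 2*(k+1)
    · simp [Nat.choose_eq_zero_of_lt hk]
    · apply hp.dvd_choose_self (by omega)
      rcases hodd with ⟨m, hm⟩
      omega
  simpa using (Nat.modEq_zero_iff_dvd.mpr hdvd).add_right 1

lemma per (p : ℕ) (hp : p.Prime) (hodd : Odd p) :
    ∀ n : ℕ, invRec (n + p) ≡ invRec n [MOD p] ∧ invRec (n + 1 + p) ≡ invRec (n + 1) [MOD p] := by
  have hp2 : 2 ≤ p := hp.two_le
  obtain ⟨m, hm⟩ : ∃ m, p = m + 2 := ⟨p - 2, by omega⟩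
  have base0 : invRec (0 + p) ≡ invRec 0 [MOD p] := by
    simpa [invRec] using invRec_p p hp hodd
  have base1 : invRec (1 + p) ≡ invRec 1 [MOD p] := by
    have h1p : 1 + p = (m + 1) + 2 := by omega
    rw [h1p, invRec]
    have : invRec (m + 1 + 1) + (m + 1 + 1) * invRec (m + 1)
        ≡ invRec (m + 1 + 1) + 0 * invRec (m + 1) [MOD p] := by
      apply Nat.ModEq.add_left
      apply Nat.ModEq.mul_right
      show (m+1+1) % p = 0 % p
      rw [hm]; simp
    calc invRec (m + 1 + 1) + (m + 1 + 1) * invRec (m + 1)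
        ≡ invRec (m + 1 + 1) + 0 * invRec (m + 1) [MOD p] := this
      _ = invRec p := by rw [hm]; ring_nf
      _ ≡ 1 [MOD p] := invRec_p p hp hodd
      _ = invRec 1 := rfl
  intro n
  induction n with
  | zero => exact ⟨base0, base1⟩
  | succ n ih =>
    refine ⟨ih.2, ?_⟩
    have h1 : n + 1 + 1 + p = (n + p) + 2 := by omega
    rw [h1, invRec, invRec]
    have hc : n + p + 1 ≡ n + 1 [MOD p] := by
      have h2 : n + p + 1 = (n + 1) + p := by ring
      rw [h2]; exact Nat.add_mod_right (n+1) p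
    exact Nat.ModEq.add (by simpa [Nat.add_right_comm] using ih.2) ((hc.mul ih.1))

theorem efficient_prime (p : ℕ) (hp : p.Prime) (hodd : Odd p)
    (h : ∀ n : ℕ, n ≤ p - 1 → ¬ p ∣ invRec n) :
    ∀ n : ℕ, ¬ p ∣ invRec n := by
  intro n
  induction n using Nat.strong_induction_on with
  | _ n ih =>
    by_cases hn : n ≤ p - 1
    · exact h n hn
    · have hpn : p ≤ n := by have := hp.two_le; omega
      have hm : n - p < n := by have := hp.two_le; omega
      have heq : (n - p) + p = n := by omega
      have hper := (per p hp hodd (n - p)).1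
      rw [heq] at hper
      intro hdvd
      exact ih (n - p) hm (Nat.modEq_zero_iff_dvd.mp
        (hper.symm.trans (Nat.modEq_zero_iff_dvd.mpr hdvd)))
end

section
/- For any prime p, either p divides I(n) for infinitely many n, or p divides I(n) for no n. -/
lemma invRec_step (n : ℕ) : invRec (n + 2) = invRec (n + 1) + (n + 1) * invRec n := rfl

lemma invRec_key (p : ℕ) (hp : p.Prime) :
    ∀ n : ℕ, ((invRec (n + p) : ZMod p)) = (invRec p : ZMod p) * invRec n := by
  have h2 := hp.two_le
  intro n
  induction n using Nat.strong_induction_on with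
  | _ n ih =>
    match n with
    | 0 => simp [invRec]
    | 1 =>
      obtain ⟨q, hq⟩ : ∃ q, p = q + 1 := ⟨p - 1, by omega⟩
      have e : 1 + p = q + 2 := by omega
      rw [e, invRec_step]
      have hq2 : q + 1 = p := by omega
      rw [hq2]
      push_cast
      rw [ZMod.natCast_self]
      simp [invRec]
    | n + 2 =>
      have h1 := ih (n + 1) (by omega)
      have h0 := ih n (by omega)
      have e1 : n + 2 + p = (n + p) + 2 := by omega
      have e2 : n + p + 1 = n + 1 + p := by omega
      rw [e1, invRec_step, invRec_step, e2]
      push_cast at h1 h0 ⊢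
      rw [h1, h0, ZMod.natCast_self]
      ring

theorem prime_divides_infinitely_or_never (p : ℕ) (hp : p.Prime) :
    {n : ℕ | p ∣ invRec n}.Infinite ∨ ∀ n : ℕ, ¬ p ∣ invRec n := by
  by_cases h : ∀ n : ℕ, ¬ p ∣ invRec n
  · exact Or.inr h
  · left
    push_neg at h
    obtain ⟨n₀, hn₀⟩ := h
    have hdiv : ∀ m : ℕ, p ∣ invRec (n₀ + m * p) := by
      intro m
      induction m with
      | zero => simpa using hn₀
      | succ m ihm =>
        have key := invRec_key p hp (n₀ + m * p)
        have h0 : ((invRec (n₀ + m * p + p) : ZMod p)) = 0 := by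
          rw [key, (ZMod.natCast_eq_zero_iff _ _).mpr ihm, mul_zero]
        have hdd : p ∣ invRec (n₀ + m * p + p) :=
          (ZMod.natCast_eq_zero_iff _ _).mp h0
        have e : n₀ + (m + 1) * p = n₀ + m * p + p := by ring
        rwa [e]
    refine Set.infinite_of_injective_forall_mem (f := fun m : ℕ => n₀ + m * p) ?_ ?_
    · intro a b hab
      have hp0 : 0 < p := hp.pos
      simp only at hab
      have h' : a * p = b * p := by omega
      exact Nat.eq_of_mul_eq_mul_right hp0 h'
    · intro m
      exact hdiv m
end

section
/- For every natural number n, 3 does not divide I(n). -/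
lemma invRec_mod3 (n : ℕ) : invRec (3*n) % 3 = 1 ∧ invRec (3*n+1) % 3 = 1 ∧
    invRec (3*n+2) % 3 = 2 := by
  induction n with
  | zero => decide
  | succ k ih =>
    obtain ⟨h0, h1, h2⟩ := ih
    have e2 : invRec (3*k+2) = invRec (3*k+1) + (3*k+1) * invRec (3*k) := rfl
    have e3 : invRec (3*k+3) = invRec (3*k+2) + (3*k+2) * invRec (3*k+1) := rfl
    have e4 : invRec (3*k+4) = invRec (3*k+3) + (3*k+3) * invRec (3*k+2) := rfl
    have e5 : invRec (3*k+5) = invRec (3*k+4) + (3*k+4) * invRec (3*k+3) := rfl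
    have h3 : invRec (3*k+3) % 3 = 1 := by
      rw [e3, Nat.add_mod, Nat.mul_mod, h1, h2]
      omega
    have h4 : invRec (3*k+4) % 3 = 1 := by
      rw [e4, Nat.add_mod, Nat.mul_mod, h2, h3]
      omega
    have h5 : invRec (3*k+5) % 3 = 2 := by
      rw [e5, Nat.add_mod, Nat.mul_mod, h3, h4]
      omega
    refine ⟨?_, ?_, ?_⟩
    · have : 3*(k+1) = 3*k+3 := by ring
      rw [this]; exact h3
    · have : 3*(k+1)+1 = 3*k+4 := by ring
      rw [this]; exact h4
    · have : 3*(k+1)+2 = 3*k+5 := by ring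
      rw [this]; exact h5

theorem three_not_dvd_involution (n : ℕ) : ¬ (3 ∣ invRec n) := by
  have h := invRec_mod3 (n / 3)
  intro hdvd
  rw [Nat.dvd_iff_mod_eq_zero] at hdvd
  have hm : n % 3 = 0 ∨ n % 3 = 1 ∨ n % 3 = 2 := by omega
  rcases hm with h0 | h1 | h2
  · have : n = 3 * (n/3) := by omega
    rw [this] at hdvd; omega
  · have : n = 3 * (n/3) + 1 := by omega
    rw [this] at hdvd; omega
  · have : n = 3 * (n/3) + 2 := by omega
    rw [this] at hdvd; omega
end

section
/- For an odd prime p and a partition λ = (λ₁,…,λ_k) of n, the multinomial coefficient satisfies (pn)!/((pλ₁)!···(pλ_k)!) ≡ n!/(λ₁!···λ_k!) (mod p²). -/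
/-!
A multinomial coefficient is a product of binomial coefficients, so it suffices to show
`C(p a, p b) ≡ C(a, b) (mod p²)`. By induction on `a`, Vandermonde's identity expands
`C(p a + p, p b + p)` as `∑_{i + j = p b + p} C(p a, i) C(p, j)`: the terms `j = 0` and `j = p`
give Pascal's recurrence, and for `0 < j < p` both `C(p, j)` and (by Lucas, since `p ∤ i`)
`C(p a, i)` are divisible by `p`.
-/

theorem Nat.Prime.dvd_choose_mul_of_not_dvd {p i : ℕ} (hp : p.Prime) (hi : ¬ p ∣ i) (a : ℕ) :
    p ∣ (p * a).choose i := by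
  have := Fact.mk hp
  have hlucas := Choose.choose_modEq_choose_mod_mul_choose_div_nat (n := p * a) (k := i) (p := p)
  have hi' : 0 < i % p := Nat.pos_of_ne_zero (mt Nat.dvd_of_mod_eq_zero hi)
  rwa [Nat.mul_mod_right, Nat.choose_eq_zero_of_lt hi', zero_mul, Nat.modEq_zero_iff_dvd] at hlucas

theorem Nat.Prime.sq_dvd_choose_mul_mul_choose {p a i j k : ℕ} (hp : p.Prime)
    (hij : i + j = p * k) (hj₀ : 0 < j) (hjp : j < p) :
    p ^ 2 ∣ (p * a).choose i * p.choose j := by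
  have hi : ¬ p ∣ i := fun hpi =>
    Nat.not_dvd_of_pos_of_lt hj₀ hjp ((Nat.dvd_add_right hpi).1 (hij ▸ dvd_mul_right p k))
  rw [sq]
  exact mul_dvd_mul (hp.dvd_choose_mul_of_not_dvd hi a) (hp.dvd_choose_self hj₀.ne' hjp)

theorem Nat.Prime.choose_mul_add_self_mul_add_self {p : ℕ} (hp : p.Prime) (a b : ℕ) :
    ((p * a + p).choose (p * b + p) : ZMod (p ^ 2)) =
      (p * a).choose (p * b + p) + (p * a).choose (p * b) := by
  rw [Nat.add_choose_eq, Nat.cast_sum,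
    Finset.sum_eq_add (p * b + p, 0) (p * b, p) (by simp [hp.ne_zero]) ?_ (by simp) (by simp)]
  · simp
  rintro ⟨i, j⟩ hij hne
  rw [Finset.HasAntidiagonal.mem_antidiagonal] at hij
  rw [ZMod.natCast_eq_zero_iff]
  rcases Nat.lt_trichotomy j p with hjp | rfl | hpj
  · rcases Nat.eq_zero_or_pos j with rfl | hj₀
    · exact absurd (by simp at hij ⊢; omega) hne.1
    · exact hp.sq_dvd_choose_mul_mul_choose (k := b + 1) (by rw [hij]; ring) hj₀ hjp
  · exact absurd (by simp at hij ⊢; omega) hne.2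
  · simp [Nat.choose_eq_zero_of_lt hpj]

theorem Nat.Prime.choose_mul_mul_eq_choose {p : ℕ} (hp : p.Prime) (a b : ℕ) :
    ((p * a).choose (p * b) : ZMod (p ^ 2)) = a.choose b := by
  induction a generalizing b with
  | zero => cases b <;> simp [Nat.choose_eq_zero_of_lt, hp.pos]
  | succ a ih =>
    cases b with
    | zero => simp
    | succ b =>
      rw [mul_add_one, mul_add_one, hp.choose_mul_add_self_mul_add_self, ← mul_add_one, ih, ih,
        Nat.choose_succ_succ', Nat.cast_add, add_comm]

theorem List.prod_map_factorial_mul_multinomial (l : List ℕ) :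
    (l.map Nat.factorial).prod * l.multinomial = l.sum.factorial := by
  induction l with
  | nil => rfl
  | cons a l ih =>
    rw [List.map_cons, List.prod_cons, List.multinomial_cons, List.sum_cons, Nat.choose_symm_add,
      ← Nat.add_choose_mul_factorial_mul_factorial, ← ih]
    ring

theorem List.multinomial_eq_factorial_div (l : List ℕ) :
    l.multinomial = l.sum.factorial / (l.map Nat.factorial).prod := by
  rw [← l.prod_map_factorial_mul_multinomial, Nat.mul_div_cancel_left]
  exact List.prod_pos (by simp [Nat.factorial_pos])

theorem Nat.Prime.multinomial_map_mul {p : ℕ} (hp : p.Prime) (l : List ℕ) :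
    ((l.map (p * ·)).multinomial : ZMod (p ^ 2)) = l.multinomial := by
  induction l with
  | nil => rfl
  | cons a l ih =>
    have hsum : (l.map (p * ·)).sum = p * l.sum := by simpa using l.sum_map_mul_left id p
    rw [List.map_cons, List.multinomial_cons, List.multinomial_cons, Nat.cast_mul, Nat.cast_mul,
      ih, hsum, ← mul_add, hp.choose_mul_mul_eq_choose]

theorem multinomial_congruence_general (p n : ℕ) (hp : p.Prime)
    (L : List ℕ) (hsum : L.sum = n) :
    (p * n).factorial / (L.map (fun x => (p * x).factorial)).prod ≡
      n.factorial / (L.map (fun x => x.factorial)).prod [MOD p ^ 2] := by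
  subst hsum
  have hmap : L.map (fun x => (p * x).factorial) = (L.map (p * ·)).map Nat.factorial :=
    (List.map_map ..).symm
  have hsum : p * L.sum = (L.map (p * ·)).sum := by simpa using (L.sum_map_mul_left id p).symm
  rw [hmap, hsum, ← List.multinomial_eq_factorial_div, ← List.multinomial_eq_factorial_div,
    ← ZMod.natCast_eq_natCast_iff]
  exact hp.multinomial_map_mul L

theorem multinomial_congruence (p n : ℕ) (hp : p.Prime) (hodd : Odd p)
    (L : List ℕ) (hpos : ∀ x ∈ L, 1 ≤ x) (hsort : L.Pairwise (· ≥ ·))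
    (hsum : L.sum = n) :
    (p * n).factorial / (L.map (fun x => (p * x).factorial)).prod ≡
      n.factorial / (L.map (fun x => x.factorial)).prod [MOD p ^ 2] :=
  multinomial_congruence_general p n hp L hsum
end

section
/- The partial sums of the involution numbers admit the closed form ∑_{j=0}^{n} I(j) = ∑_{k≥0} ((2k)!/(k!·2^k))·C(n+1, 2k+1). -/
/-- Double factorial (2k-1)!!. -/
def dfac : ℕ → ℕ
  | 0 => 1
  | k + 1 => (2 * k + 1) * dfac k

lemma dfac_mul (k : ℕ) : dfac k * (k.factorial * 2 ^ k) = (2 * k).factorial := by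
  induction k with
  | zero => simp [dfac]
  | succ k ih =>
      have h : 2 * (k + 1) = 2 * k + 1 + 1 := by ring
      rw [h, Nat.factorial_succ (2*k+1), Nat.factorial_succ (2*k), ← ih]
      simp only [dfac, Nat.factorial_succ, pow_succ]
      ring

lemma dfac_eq (k : ℕ) : (2 * k).factorial / (k.factorial * 2 ^ k) = dfac k := by
  rw [← dfac_mul k, Nat.mul_div_cancel]
  positivity

lemma hockey (m N : ℕ) : ∑ j ∈ Finset.range N, j.choose m = N.choose (m + 1) := by
  induction N with
  | zero => simp
  | succ N ih => rw [Finset.sum_range_succ, ih, Nat.choose_succ_succ']; ring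

lemma choose_zero_of_lt {j m : ℕ} (h : j < m) : j.choose m = 0 :=
  Nat.choose_eq_zero_of_lt h

/-- Key identity: invRec n = ∑ dfac k * C(n, 2k), over any big enough range. -/
lemma invRec_eq : ∀ n, invRec n = ∑ k ∈ Finset.range (n + 1), dfac k * n.choose (2 * k)
  | 0 => by simp [invRec, dfac]
  | 1 => by simp [invRec, dfac, Finset.sum_range_succ]
  | n + 2 => by
      rw [show invRec (n+2) = invRec (n+1) + (n+1) * invRec n from rfl,
        invRec_eq (n+1), invRec_eq n]
      have e1 : ∑ k ∈ Finset.range (n + 2), dfac k * (n+1).choose (2*k)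
          = ∑ k ∈ Finset.range (n + 3), dfac k * (n+1).choose (2*k) := by
        rw [Finset.sum_range_succ (n := n+2)]
        have : (n+1).choose (2*(n+2)) = 0 := Nat.choose_eq_zero_of_lt (by omega)
        simp [this]
      have e2 : (n+1) * ∑ k ∈ Finset.range (n + 1), dfac k * n.choose (2*k)
          = ∑ k ∈ Finset.range (n + 2), (n+1) * (dfac k * n.choose (2*k)) := by
        rw [Finset.mul_sum, Finset.sum_range_succ (n := n+1)]
        have h2 : n.choose (2*(n+1)) = 0 := Nat.choose_eq_zero_of_lt (by omega)
        simp [h2]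
      rw [e1, e2, Finset.sum_range_succ' _ (n+2), Finset.sum_range_succ' _ (n+2)]
      have step : ∀ k, dfac (k+1) * (n+2).choose (2*(k+1))
          = dfac (k+1) * (n+1).choose (2*(k+1)) + (n+1) * (dfac k * n.choose (2*k)) := by
        intro k
        have hp : (n + 2).choose (2 * (k + 1)) =
            (n+1).choose (2*k+1) + (n+1).choose (2*(k+1)) := by
          have h2 : 2 * (k + 1) = (2*k+1) + 1 := by ring
          rw [h2, Nat.choose_succ_succ]
        have key : dfac (k+1) * (n+1).choose (2*k+1) = (n+1) * (dfac k * n.choose (2*k)) := by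
          have h := Nat.add_one_mul_choose_eq n (2*k)
          show (2*k+1) * dfac k * (n+1).choose (2*k+1) = (n+1) * (dfac k * n.choose (2*k))
          calc (2*k+1) * dfac k * (n+1).choose (2*k+1)
              = dfac k * ((n+1).choose (2*k+1) * (2*k+1)) := by ring
            _ = dfac k * ((n+1) * n.choose (2*k)) := by
                rw [show (n+1).choose (2*k+1) * (2*k+1) = (n+1) * n.choose (2*k) from h.symm]
            _ = (n+1) * (dfac k * n.choose (2*k)) := by ring
        rw [hp, Nat.mul_add, key]
        ring
      have hs : ∑ k ∈ Finset.range (n+2), dfac (k+1) * (n+2).choose (2*(k+1))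
          = ∑ k ∈ Finset.range (n+2), (dfac (k+1) * (n+1).choose (2*(k+1))
              + (n+1) * (dfac k * n.choose (2*k))) :=
        Finset.sum_congr rfl (fun k _ => step k)
      rw [hs, Finset.sum_add_distrib]
      simp only [Nat.mul_zero, Nat.choose_zero_right, Nat.mul_one]
      ring

theorem partial_sum_involutions (n : ℕ) :
    ∑ j ∈ Finset.range (n + 1), invRec j =
      ∑ k ∈ Finset.range (n + 1),
        ((2 * k).factorial / (k.factorial * 2 ^ k)) * (n + 1).choose (2 * k + 1) := by
  have h : ∀ j ∈ Finset.range (n + 1),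
      invRec j = ∑ k ∈ Finset.range (n + 1), dfac k * j.choose (2 * k) := by
    intro j hj
    rw [invRec_eq j]
    rcases le_or_gt (n + 1) (j + 1) with h | h
    · have : n + 1 = j + 1 := by
        simp only [Finset.mem_range] at hj; omega
      rw [this]
    · rw [← Finset.sum_range_add_sum_Ico _ (le_of_lt h)]
      have : ∑ k ∈ Finset.Ico (j+1) (n+1), dfac k * j.choose (2*k) = 0 := by
        apply Finset.sum_eq_zero
        intro k hk
        simp only [Finset.mem_Ico] at hk
        have : j.choose (2*k) = 0 := Nat.choose_eq_zero_of_lt (by omega)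
        simp [this]
      simp [this]
  rw [Finset.sum_congr rfl h, Finset.sum_comm]
  apply Finset.sum_congr rfl
  intro k _
  rw [dfac_eq, ← Finset.mul_sum, hockey]
end

section
/- With a_n = ∑_{j=0}^{n} I(j), the alternating sum satisfies ∑_{k=1}^{n} (−1)^{n−k}·C(n,k)·a_{k−1} = (2m)!/(2^m·m!) if n = 2m+1 is odd, and 0 if n = 2m is even (n ≥ 2). -/
/-- Partial sums of the involution numbers. -/
def aSeq (n : ℕ) : ℕ := ∑ j ∈ Finset.range (n + 1), invRec j

/-!
An involution of `n` points is determined by its `k` non-fixed points and a perfect matching of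
them, so `I(n) = ∑ₖ C(n,k) M(k)`, where the number `M(k)` of perfect matchings of `k` points is
`(2m-1)‼` for `k = 2m` and `0` for odd `k`. Binomial inversion turns this into `Δⁿ I(0) = M(n)`.
The alternating sum of the theorem is `Δⁿ` at `0` of `k ↦ a_{k-1} = ∑_{j<k} I(j)`, whose forward
difference is `I`; hence it equals `Δⁿ⁻¹ I(0) = M(n-1)`.
-/

open Finset fwdDiff
open scoped Nat

theorem sum_range_succ_choose_smul {M : Type*} [AddCommMonoid M] (f : ℕ → M) (m : ℕ) :
    ∑ k ∈ range (m + 2), (m + 1).choose k • f k =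
      ∑ k ∈ range (m + 1), m.choose k • f k + ∑ k ∈ range (m + 1), m.choose k • f (k + 1) := by
  have hlast : ∑ k ∈ range (m + 2), m.choose k • f k = ∑ k ∈ range (m + 1), m.choose k • f k := by
    rw [sum_range_succ, Nat.choose_succ_self, zero_smul, add_zero]
  rw [sum_range_succ', ← hlast, sum_range_succ' _ (m + 1)]
  simp only [Nat.choose_succ_succ', add_smul, sum_add_distrib, Nat.choose_zero_right]
  abel

theorem fwdDiff_iter_zero_of_eq_sum_choose {f g : ℕ → ℤ}
    (hf : ∀ x, f x = ∑ k ∈ range (x + 1), x.choose k * g k) (n : ℕ) :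
    (Δ_[1])^[n] f 0 = g n := by
  have hf' : ∀ x ≤ n, f x = ∑ k ∈ range (n + 1), (x.choose k : ℤ) * g k := by
    intro x hx
    rw [hf, sum_subset (range_subset_range.2 (by omega : x + 1 ≤ n + 1))]
    intro k _ hk
    rw [Nat.choose_eq_zero_of_lt (by simpa using hk), Nat.cast_zero, zero_mul]
  calc (Δ_[1])^[n] f 0
      = (Δ_[1])^[n] (∑ k ∈ range (n + 1), g k • fun x ↦ (x.choose k : ℤ)) 0 := by
        simp only [fwdDiff_iter_eq_sum_shift]
        refine sum_congr rfl fun x hx ↦ ?_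
        rw [zero_add, smul_eq_mul, nsmul_one, Nat.cast_id,
          hf' x (by simpa [Nat.lt_succ_iff] using hx)]
        simp [Finset.sum_apply, mul_comm]
    _ = g n := by
        simp only [fwdDiff_iter_finsetSum, fwdDiff_iter_const_smul, Finset.sum_apply,
          Pi.smul_apply, fwdDiff_iter_choose_zero]
        simp

theorem fwdDiff_iter_succ_sum_range {G : Type*} [AddCommGroup G] (f : ℕ → G) (n : ℕ) :
    (Δ_[1])^[n + 1] (fun k ↦ ∑ j ∈ range k, f j) 0 = (Δ_[1])^[n] f 0 := by
  have : Δ_[1] (fun k ↦ ∑ j ∈ range k, f j) = f := funext fun k ↦ sum_range_succ_sub_sum f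
  rw [Function.iterate_succ_apply, this]

theorem fwdDiff_iter_zero_eq_sum_Icc {G : Type*} [AddCommGroup G] (f : ℕ → G) (hf : f 0 = 0)
    (n : ℕ) : (Δ_[1])^[n] f 0 = ∑ k ∈ Icc 1 n, ((-1 : ℤ) ^ (n - k) * n.choose k) • f k := by
  rw [fwdDiff_iter_eq_sum_shift, range_eq_Ico, sum_eq_sum_Ico_succ_bot (by omega),
    Ico_add_one_right_eq_Icc]
  simp [hf]

theorem Nat.factorial_two_mul_div (m : ℕ) : (2 * m)! / (2 ^ m * m !) = (2 * m - 1)‼ := by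
  rcases m with _ | m
  · rfl
  rw [← Nat.doubleFactorial_two_mul, show 2 * (m + 1) = 2 * m + 1 + 1 by ring,
    Nat.factorial_eq_mul_doubleFactorial, Nat.mul_div_cancel_left _ (by positivity)]
  rfl

def perfectMatchingCount : ℕ → ℕ
  | 0 => 1
  | 1 => 0
  | n + 2 => (n + 1) * perfectMatchingCount n

theorem perfectMatchingCount_two_mul (m : ℕ) : perfectMatchingCount (2 * m) = (2 * m - 1)‼ := by
  induction m with
  | zero => rfl
  | succ m ih =>
    rw [show 2 * (m + 1) = 2 * m + 2 by ring, perfectMatchingCount, ih,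
      show 2 * m + 2 - 1 = 2 * m + 1 by omega, Nat.doubleFactorial_add_one]

theorem perfectMatchingCount_two_mul_add_one (m : ℕ) : perfectMatchingCount (2 * m + 1) = 0 := by
  induction m with
  | zero => rfl
  | succ m ih => rw [show 2 * (m + 1) + 1 = 2 * m + 1 + 2 by ring, perfectMatchingCount, ih, mul_zero]

theorem sum_choose_perfectMatchingCount_add_two (n : ℕ) :
    ∑ k ∈ range (n + 3), (n + 2).choose k * perfectMatchingCount k =
      ∑ k ∈ range (n + 2), (n + 1).choose k * perfectMatchingCount k +
        (n + 1) * ∑ k ∈ range (n + 1), n.choose k * perfectMatchingCount k := by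
  have hshift : ∑ k ∈ range (n + 2), (n + 1).choose k * perfectMatchingCount (k + 1) =
      (n + 1) * ∑ k ∈ range (n + 1), n.choose k * perfectMatchingCount k := by
    rw [sum_range_succ', mul_sum]
    refine (add_eq_left.2 rfl).trans (sum_congr rfl fun k _ ↦ ?_)
    rw [perfectMatchingCount, ← mul_assoc, ← Nat.add_one_mul_choose_eq, mul_assoc]
  simpa only [smul_eq_mul, hshift] using sum_range_succ_choose_smul perfectMatchingCount (n + 1)

theorem invRec_eq_sum_choose_perfectMatchingCount : ∀ n : ℕ,
    invRec n = ∑ k ∈ range (n + 1), n.choose k * perfectMatchingCount k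
  | 0 => rfl
  | 1 => rfl
  | n + 2 => by
    rw [invRec, invRec_eq_sum_choose_perfectMatchingCount (n + 1),
      invRec_eq_sum_choose_perfectMatchingCount n, sum_choose_perfectMatchingCount_add_two]

theorem sum_Icc_alternating_choose_aSeq (n : ℕ) :
    ∑ k ∈ Icc 1 (n + 1), (-1 : ℤ) ^ (n + 1 - k) * (n + 1).choose k * aSeq (k - 1) =
      perfectMatchingCount n := by
  have hinv := fwdDiff_iter_zero_of_eq_sum_choose (f := fun k ↦ (invRec k : ℤ))
    (g := fun k ↦ (perfectMatchingCount k : ℤ))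
    (fun x ↦ by exact_mod_cast invRec_eq_sum_choose_perfectMatchingCount x) n
  rw [← fwdDiff_iter_succ_sum_range, fwdDiff_iter_zero_eq_sum_Icc _ (sum_range_zero _)] at hinv
  rw [← hinv]
  refine sum_congr rfl fun k hk ↦ ?_
  obtain ⟨j, rfl⟩ : ∃ j, k = j + 1 := ⟨k - 1, by grind⟩
  simp [aSeq]

theorem alternating_sum_partial_sums :
    (∀ m : ℕ, ∑ k ∈ Finset.Icc 1 (2 * m + 1),
        (-1 : ℤ) ^ (2 * m + 1 - k) * (2 * m + 1).choose k * aSeq (k - 1) =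
      ((2 * m).factorial / (2 ^ m * m.factorial) : ℕ)) ∧
    (∀ m : ℕ, 1 ≤ m → ∑ k ∈ Finset.Icc 1 (2 * m),
        (-1 : ℤ) ^ (2 * m - k) * (2 * m).choose k * aSeq (k - 1) = 0) := by
  refine ⟨fun m ↦ ?_, fun m hm ↦ ?_⟩
  · rw [sum_Icc_alternating_choose_aSeq, perfectMatchingCount_two_mul, Nat.factorial_two_mul_div]
  · obtain ⟨m, rfl⟩ : ∃ j, m = j + 1 := ⟨m - 1, by omega⟩
    rw [show 2 * (m + 1) = 2 * m + 1 + 1 by ring, sum_Icc_alternating_choose_aSeq,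
      perfectMatchingCount_two_mul_add_one, Nat.cast_zero]
end
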